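/- arXiv:2503.24335 — 3 statements merged into one kernel-verified Lean document; each statement's English description precedes it below -/
import Mathlib

section
/- Let γ be a hereditary Plotkin radical on finite groups which satisfies F*(G) ⊆ γ(G) for every finite group G with h_γ(G) < ∞. If M is a maximal subgroup of a finite group G and both h_γ(G) and h_γ(M) are finite, then h_γ(G) - h_γ(M) ≤ 2. -/
open Subgroup

open Subgroup

/-- The Fitting subgroup of a finite group: the largest normal nilpotent subgroup,
realized as the join of all normal nilpotent subgroups. -/
def fittingSub (G : Type*) [Group G] : Subgroup G :=
  sSup {H : Subgroup G | H.Normal ∧ Group.IsNilpotent H}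

/-- A subgroup is subnormal if it can be joined to the whole group by a chain of
successively normal subgroups. -/
def Subnormal {G : Type*} [Group G] (H : Subgroup G) : Prop :=
  ∃ (n : ℕ) (c : Fin (n + 1) → Subgroup G),
    c 0 = H ∧ c (Fin.last n) = ⊤ ∧
      ∀ i : Fin n, c i.castSucc ≤ c i.succ ∧
        ∀ x ∈ c i.castSucc, ∀ y ∈ c i.succ, y * x * y⁻¹ ∈ c i.castSucc

/-- A group is quasisimple if it is perfect and its central quotient is simple. -/
def IsQuasisimple (Q : Type*) [Group Q] : Prop :=
  commutator Q = ⊤ ∧ IsSimpleGroup (Q ⧸ Subgroup.center Q)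

/-- The layer `E(G)`: the subgroup generated by all subnormal quasisimple subgroups. -/
def layer (G : Type*) [Group G] : Subgroup G :=
  sSup {H : Subgroup G | Subnormal H ∧ IsQuasisimple H}

/-- The generalized Fitting subgroup `F*(G) = F(G) E(G)`. -/
def genFitting (G : Type*) [Group G] : Subgroup G :=
  fittingSub G ⊔ layer G

open Subgroup

/-- The ascending `F`-series of a finite group, together with proofs of normality. -/
def radSeriesAux (F : ∀ (G : Type) [Group G] [Finite G], Subgroup G)
    (hF : ∀ (G : Type) [Group G] [Finite G], (F G).Normal)
    (G : Type) [Group G] [Finite G] : ℕ → {H : Subgroup G // H.Normal}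
  | 0 => ⟨⊥, inferInstance⟩
  | n + 1 =>
    letI := (radSeriesAux F hF G n).2
    ⟨(F (G ⧸ (radSeriesAux F hF G n).1)).comap (QuotientGroup.mk' (radSeriesAux F hF G n).1),
      Subgroup.Normal.comap (hF _) _⟩

/-- The ascending `F`-series of a finite group. -/
def radSeries (F : ∀ (G : Type) [Group G] [Finite G], Subgroup G)
    (hF : ∀ (G : Type) [Group G] [Finite G], (F G).Normal)
    (G : Type) [Group G] [Finite G] (n : ℕ) : Subgroup G :=
  (radSeriesAux F hF G n).1

/-- The `F`-length of a finite group: the least `h` with `F_{(h)}(G) = G`,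
and `∞` if there is no such `h`. -/
noncomputable def radLength (F : ∀ (G : Type) [Group G] [Finite G], Subgroup G)
    (hF : ∀ (G : Type) [Group G] [Finite G], (F G).Normal)
    (G : Type) [Group G] [Finite G] : ℕ∞ :=
  sInf {n : ℕ∞ | ∃ m : ℕ, n = m ∧ radSeries F hF G m = ⊤}

open Subgroup

/-- A functorial: an assignment of a subgroup `sub G ≤ G` to every finite group `G`,
compatible with isomorphisms (hence the value is always a normal -- indeed
characteristic -- subgroup, which we record as a field). -/
structure GroupFunctorial where
  sub : ∀ (G : Type) [Group G] [Finite G], Subgroup G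
  map_iso : ∀ (G H : Type) [Group G] [Finite G] [Group H] [Finite H] (e : G ≃* H),
    (sub G).map e.toMonoidHom = sub H
  normal : ∀ (G : Type) [Group G] [Finite G], (sub G).Normal

/-- A hereditary Plotkin radical: a functorial satisfying
(P1) `f(γ(G)) ≤ γ(f(G))` for every epimorphism `f : G → G*`, and
(P2) `γ(G) ∩ N = γ(N)` for every normal subgroup `N` of `G`. -/
structure PlotkinRadical extends GroupFunctorial where
  map_le : ∀ (G H : Type) [Group G] [Finite G] [Group H] [Finite H] (f : G →* H),
    Function.Surjective f → (sub G).map f ≤ sub H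
  inf_eq : ∀ (G : Type) [Group G] [Finite G] (N : Subgroup G), N.Normal →
    sub G ⊓ N = (sub N).map N.subtype

/-- A hereditary Kurosh-Amitsur radical: a hereditary Plotkin radical additionally
satisfying (P3) `γ(G/γ(G)) = 1` for every finite group `G`. -/
structure KARadical extends PlotkinRadical where
  radical_quot : ∀ (G : Type) [Group G] [Finite G],
    letI := normal G
    sub (G ⧸ sub G) = ⊥

/-- The γ-series of a hereditary Plotkin radical. -/
def PlotkinRadical.series (γ : PlotkinRadical) (G : Type) [Group G] [Finite G] (n : ℕ) :
    Subgroup G :=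
  radSeries γ.sub γ.normal G n

/-- The γ-length of a finite group: the least `h` with `γ_{(h)}(G) = G`, and `∞` if
there is no such `h`. -/
noncomputable def PlotkinRadical.length (γ : PlotkinRadical) (G : Type) [Group G] [Finite G] :
    ℕ∞ :=
  radLength γ.sub γ.normal G

/-!
The heart of the argument is `γ_{(m)}(M) ≤ γ_{(m+2)}(G)` for a maximal subgroup `M`, by induction
on `|G|`. If `γ_{(2)}(G) ⊄ M`, then `G = M γ_{(2)}(G)` and `M` maps onto `G/γ_{(2)}(G)`. Otherwise
`γ(M) ≤ γ(G)`: modulo `γ(G)` the image of `γ(M)` centralizes `γ(G/γ(G)) = γ_{(2)}(G)/γ(G)`, and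
`F* ≤ γ` forces `C_H(γ(H)) ≤ γ(H)`. Indeed `C = C_H(γ(H))` has central radical `γ(C) = γ(H) ∩ C`,
and a minimal subnormal subgroup of `C` outside `γ(C)` has only central proper normal subgroups,
so it is nilpotent or quasisimple and lies in `F* ≤ γ`. Then `γ_{(m+1)}(M)` maps into
`γ_{(m)}(M/γ(G))`, and `M/γ(G)` is maximal in the smaller group `G/γ(G)`.

For `h = h_γ(M)` this gives `M ≤ γ_{(h+2)}(G)`. If this is not all of `G`, then `M` is normal,
heredity gives `M ≤ γ_{(h)}(G)`, and `γ_{(h+1)}(G) = G` because the `γ`-series of a group of finite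
`γ`-length grows strictly until it reaches the whole group.
-/

open Subgroup QuotientGroup
open scoped commutatorElement

theorem Subgroup.map_subtype_top {G : Type*} [Group G] (H : Subgroup G) :
    (⊤ : Subgroup H).map H.subtype = H := by
  rw [← MonoidHom.range_eq_map, range_subtype]

theorem Subgroup.isCoatom_map_of_ker_le {G H : Type*} [Group G] [Group H] {f : G →* H}
    (hf : Function.Surjective f) {M : Subgroup G} (hker : f.ker ≤ M) (hM : IsCoatom M) :
    IsCoatom (M.map f) := by
  have hcomap : (M.map f).comap f = M := comap_map_eq_self hker
  refine ⟨fun h ↦ hM.1 (by rw [← hcomap, h, comap_top]), fun B hB ↦ ?_⟩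
  have := hM.2 (B.comap f) (by rw [← hcomap]; exact (comap_lt_comap_of_surjective hf).mpr hB)
  exact comap_injective hf (by rw [this, comap_top])

theorem IsQuasisimple.of_mulEquiv {Q R : Type*} [Group Q] [Group R] (e : Q ≃* R)
    (h : IsQuasisimple Q) : IsQuasisimple R := by
  have hrange : e.toMonoidHom.range = ⊤ := MonoidHom.range_eq_top.mpr e.surjective
  have hcenter : (center Q).map e.toMonoidHom = center R := by
    ext y
    simp only [mem_map_equiv, mem_center_iff, e.symm.surjective.forall, ← map_mul,
      e.symm.injective.eq_iff]
  refine ⟨?_, (QuotientGroup.congr _ _ e hcenter).isSimpleGroup_congr.mp h.2⟩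
  rw [_root_.commutator_def, ← hrange, ← map_commutator_eq, h.1, ← MonoidHom.range_eq_map]

theorem genFitting_eq_top_of_isNilpotent (T : Type*) [Group T] [Group.IsNilpotent T] :
    genFitting T = ⊤ :=
  top_unique (le_sup_of_le_left (le_sSup ⟨inferInstance, inferInstance⟩))

theorem genFitting_eq_top_of_isQuasisimple {T : Type*} [Group T] (h : IsQuasisimple T) :
    genFitting T = ⊤ :=
  top_unique (le_sup_of_le_right (le_sSup
    ⟨⟨0, fun _ ↦ ⊤, rfl, rfl, fun i ↦ i.elim0⟩, h.of_mulEquiv topEquiv.symm⟩))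

theorem isNilpotent_or_isQuasisimple_of_forall_normal_le_center {T : Type*} [Group T]
    (h : ∀ N : Subgroup T, N.Normal → N ≠ ⊤ → N ≤ center T) :
    Group.IsNilpotent T ∨ IsQuasisimple T := by
  by_cases hc : commutator T ≤ center T
  · refine Or.inl ⟨2, eq_top_iff.mpr fun x _ ↦ ?_⟩
    refine Subgroup.mem_upperCentralSeries_succ_iff.mpr fun y ↦ ?_
    rw [Subgroup.upperCentralSeries_one]
    exact hc (commutator_mem_commutator (mem_top x) (mem_top y))
  have hperf : commutator T = ⊤ := by_contra fun hne ↦ hc (h _ inferInstance hne)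
  have : Nontrivial (T ⧸ center T) :=
    QuotientGroup.nontrivial_iff.mpr fun htop ↦ hc (htop ▸ le_top)
  refine Or.inr ⟨hperf, ⟨fun N hN ↦ ?_⟩⟩
  by_cases hN' : N.comap (mk' (center T)) = ⊤
  · exact Or.inr (comap_injective (mk'_surjective _) (by rw [hN', comap_top]))
  · refine Or.inl (eq_bot_iff.mpr ?_)
    rw [← map_comap_eq_self_of_surjective (mk'_surjective (center T)) N]
    exact (map_mono (h _ (hN.comap _) hN')).trans (map_mk'_self _).le

theorem genFitting_eq_top_of_forall_normal_le_center {T : Type*} [Group T]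
    (h : ∀ N : Subgroup T, N.Normal → N ≠ ⊤ → N ≤ center T) : genFitting T = ⊤ :=
  (isNilpotent_or_isQuasisimple_of_forall_normal_le_center h).elim
    (fun _ ↦ genFitting_eq_top_of_isNilpotent T) genFitting_eq_top_of_isQuasisimple

namespace PlotkinRadical

variable (γ : PlotkinRadical)

section Series

variable {G H Q Q' : Type} [Group G] [Finite G] [Group H] [Finite H] [Group Q] [Finite Q]
  [Group Q'] [Finite Q']

instance normal_series (n : ℕ) : (γ.series G n).Normal := (radSeriesAux γ.sub γ.normal G n).2

theorem series_zero : γ.series G 0 = ⊥ := rfl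

theorem series_succ (n : ℕ) :
    γ.series G (n + 1) = (γ.sub (G ⧸ γ.series G n)).comap (mk' (γ.series G n)) := rfl

theorem comap_sub_eq_of_ker_eq {P : Type*} [Group P] (f : P →* Q) (g : P →* Q')
    (hf : Function.Surjective f) (hg : Function.Surjective g) (h : f.ker = g.ker) :
    (γ.sub Q).comap f = (γ.sub Q').comap g := by
  let e : Q ≃* Q' := (quotientKerEquivOfSurjective f hf).symm.trans
    ((quotientMulEquivOfEq h).trans (quotientKerEquivOfSurjective g hg))
  have hge : g = e.toMonoidHom.comp f := by
    ext x
    have hx : (quotientKerEquivOfSurjective f hf).symm (f x) = (x : P ⧸ f.ker) :=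
      (MulEquiv.symm_apply_eq _).mpr rfl
    simp only [MonoidHom.comp_apply, MulEquiv.coe_toMonoidHom, e, MulEquiv.trans_apply, hx]
    rfl
  rw [hge, ← comap_comap, ← γ.map_iso Q Q' e,
    comap_map_eq_self_of_injective e.injective]

theorem series_succ_eq_comap {n : ℕ} (f : G →* Q) (hf : Function.Surjective f)
    (hker : f.ker = γ.series G n) : γ.series G (n + 1) = (γ.sub Q).comap f := by
  rw [series_succ]
  exact γ.comap_sub_eq_of_ker_eq _ f (mk'_surjective _) hf (by rw [ker_mk', hker])

theorem series_one : γ.series G 1 = γ.sub G := by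
  rw [γ.series_succ_eq_comap (MonoidHom.id G) Function.surjective_id MonoidHom.ker_id, comap_id]

theorem series_mono : Monotone (γ.series G) :=
  monotone_nat_of_le_succ fun n ↦ by rw [series_succ]; exact le_comap_mk' _ _

theorem series_add (k m : ℕ) :
    γ.series G (k + m) = (γ.series (G ⧸ γ.series G k) m).comap (mk' (γ.series G k)) := by
  induction m with
  | zero => rw [add_zero, series_zero, MonoidHom.comap_bot, ker_mk']
  | succ m ih =>
    rw [← add_assoc, series_succ _ (G := G ⧸ _), comap_comap]
    exact γ.series_succ_eq_comap _
      ((mk'_surjective _).comp (mk'_surjective _)) (by rw [← MonoidHom.comap_ker, ker_mk', ih])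

theorem map_series_le (f : G →* H) (hf : Function.Surjective f) (j : ℕ) :
    (γ.series G j).map f ≤ γ.series H j := by
  induction j with
  | zero => simp [series_zero]
  | succ n ih =>
    rw [series_succ, series_succ, map_le_iff_le_comap]
    intro x hx
    let f' := QuotientGroup.map _ _ f (map_le_iff_le_comap.mp ih)
    have hf' : Function.Surjective f' :=
      map_surjective_of_surjective _ _ _ ((mk'_surjective _).comp hf) _
    exact γ.map_le _ _ f' hf' ⟨_, hx, rfl⟩

theorem map_series_add_le (f : G →* H) (hf : Function.Surjective f) {k : ℕ}
    (hk : γ.series G k ≤ f.ker) (m : ℕ) : (γ.series G (k + m)).map f ≤ γ.series H m := by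
  let f' := lift _ f hk
  have hf' : f = f'.comp (mk' _) := rfl
  rw [series_add, hf', ← Subgroup.map_map, map_comap_eq_self_of_surjective (mk'_surjective _)]
  exact γ.map_series_le f' (fun y ↦ (hf y).imp' QuotientGroup.mk fun _ ↦ id) m

theorem length_le_iff (h : ℕ) : γ.length G ≤ h ↔ γ.series G h = ⊤ := by
  refine ⟨fun hle ↦ ?_, fun hh ↦ sInf_le ⟨h, rfl, hh⟩⟩
  by_contra hne
  have : ((h + 1 : ℕ) : ℕ∞) ≤ γ.length G := by
    refine le_sInf ?_
    rintro _ ⟨m, rfl, hm⟩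
    have : h < m := not_le.mp fun hmh ↦ hne (top_unique (hm ▸ γ.series_mono hmh))
    exact_mod_cast this
  have := this.trans hle
  norm_cast at this
  omega

theorem length_ne_top_iff : γ.length G ≠ ⊤ ↔ ∃ h : ℕ, γ.series G h = ⊤ := by
  refine ⟨fun hG ↦ ?_, fun ⟨h, hh⟩ ↦ ?_⟩
  · obtain ⟨h, hh⟩ := ENat.ne_top_iff_exists.mp hG
    exact ⟨h, (γ.length_le_iff h).mp hh.ge⟩
  · exact ne_top_of_le_ne_top (ENat.natCast_ne_top h) ((γ.length_le_iff h).mpr hh)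

theorem length_ne_top_of_surjective (f : G →* H) (hf : Function.Surjective f)
    (hG : γ.length G ≠ ⊤) : γ.length H ≠ ⊤ := by
  obtain ⟨h, hh⟩ := (γ.length_ne_top_iff).mp hG
  refine (γ.length_ne_top_iff).mpr ⟨h, top_unique ?_⟩
  simpa [hh, map_top_of_surjective f hf] using γ.map_series_le f hf h

theorem map_subtype_series (N : Subgroup G) [N.Normal] (j : ℕ) :
    (γ.series N j).map N.subtype = γ.series G j ⊓ N := by
  induction j with
  | zero => simp [series_zero]
  | succ n ih =>
    let π := mk' (γ.series G n)
    let φ := π.subgroupMap N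
    have hker : φ.ker = γ.series N n := by
      ext x
      have hx : x ∈ φ.ker ↔ (x : G) ∈ γ.series G n ⊓ N := by
        simp [φ, π, Subtype.ext_iff, x.2]
      rw [hx, ← ih]
      exact mem_map_iff_mem N.subtype_injective
    have hP2 := γ.inf_eq _ (N.map π) (Subgroup.Normal.map inferInstance π (mk'_surjective _))
    rw [γ.series_succ_eq_comap φ (π.subgroupMap_surjective N) hker, series_succ]
    ext x
    constructor
    · rintro ⟨⟨x, hxN⟩, hx, rfl⟩
      have : π x ∈ γ.sub _ ⊓ N.map π := hP2 ▸ ⟨_, hx, rfl⟩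
      exact ⟨this.1, hxN⟩
    · rintro ⟨hx, hxN⟩
      have : π x ∈ γ.sub _ ⊓ N.map π := ⟨hx, x, hxN, rfl⟩
      obtain ⟨y, hy, hyx⟩ := hP2 ▸ this
      refine ⟨⟨x, hxN⟩, ?_, rfl⟩
      show φ ⟨x, hxN⟩ ∈ γ.sub _
      rwa [show φ ⟨x, hxN⟩ = y from Subtype.ext hyx.symm]

theorem length_ne_top_of_normal (N : Subgroup G) [N.Normal] (hG : γ.length G ≠ ⊤) :
    γ.length N ≠ ⊤ := by
  obtain ⟨h, hh⟩ := (γ.length_ne_top_iff).mp hG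
  refine (γ.length_ne_top_iff).mpr ⟨h, map_injective N.subtype_injective ?_⟩
  rw [map_subtype_series, hh, top_inf_eq, map_subtype_top]

theorem series_add_eq_of_series_succ_eq {n : ℕ} (h : γ.series G (n + 1) = γ.series G n)
    (m : ℕ) : γ.series G (n + m) = γ.series G n := by
  induction m with
  | zero => rfl
  | succ m ih =>
    rw [← add_assoc, γ.series_succ_eq_comap (mk' (γ.series G n)) (mk'_surjective _)
      (by rw [ker_mk', ih]), ← series_succ, h]

theorem series_eq_top_of_series_succ_eq (hG : γ.length G ≠ ⊤) {n : ℕ}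
    (h : γ.series G (n + 1) = γ.series G n) : γ.series G n = ⊤ := by
  obtain ⟨k, hk⟩ := (γ.length_ne_top_iff).mp hG
  rw [← γ.series_add_eq_of_series_succ_eq h k, eq_top_iff, ← hk]
  exact γ.series_mono (Nat.le_add_left k n)

theorem sub_ne_bot [Nontrivial G] (hG : γ.length G ≠ ⊤) : γ.sub G ≠ ⊥ := fun hbot ↦
  bot_ne_top (γ.series_eq_top_of_series_succ_eq hG (n := 0) (by rw [series_one, hbot]; rfl))

theorem card_quotient_series_one_lt [Nontrivial G] (hG : γ.length G ≠ ⊤) :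
    Nat.card (G ⧸ γ.series G 1) < Nat.card G := by
  rw [card_eq_card_quotient_mul_card_subgroup (γ.series G 1)]
  refine lt_mul_of_one_lt_right Nat.card_pos ((one_lt_card_iff_ne_bot _).mpr ?_)
  rw [series_one]
  exact γ.sub_ne_bot hG

theorem series_succ_eq_top_of_isCoatom_le (hG : γ.length G ≠ ⊤) {M : Subgroup G}
    (hM : IsCoatom M) {n : ℕ} (hle : M ≤ γ.series G n) : γ.series G (n + 1) = ⊤ := by
  by_contra hne
  have hn : γ.series G n ≠ ⊤ := fun h ↦ hne (top_unique (h ▸ γ.series_mono n.le_succ))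
  have hn1 := (hM.le_iff.mp (hle.trans (γ.series_mono n.le_succ))).resolve_left hne
  have hn0 := (hM.le_iff.mp hle).resolve_left hn
  exact hn (γ.series_eq_top_of_series_succ_eq hG (hn1.trans hn0.symm))

end Series

section SubgroupRadical

variable {G : Type} [Group G] [Finite G]

def subOf (A : Subgroup G) : Subgroup G := (γ.sub A).map A.subtype

theorem subOf_top : γ.subOf (⊤ : Subgroup G) = γ.sub G := γ.map_iso _ _ topEquiv

theorem conj_mem_subOf {A : Subgroup G} {g x : G} (hg : g ∈ A) (hx : x ∈ γ.subOf A) :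
    g * x * g⁻¹ ∈ γ.subOf A := by
  obtain ⟨y, hy, rfl⟩ := hx
  exact ⟨⟨g, hg⟩ * y * ⟨g, hg⟩⁻¹, (γ.normal A).conj_mem y hy _, rfl⟩

theorem subOf_inf_eq {A B : Subgroup G} (hAB : A ≤ B) [(A.subgroupOf B).Normal] :
    γ.subOf B ⊓ A = γ.subOf A := by
  have h := congrArg (map B.subtype) (γ.inf_eq B (A.subgroupOf B) inferInstance)
  rwa [map_inf _ _ _ B.subtype_injective, subgroupOf_map_subtype, inf_of_le_left hAB,
    Subgroup.map_map, show B.subtype.comp (A.subgroupOf B).subtype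
      = A.subtype.comp (subgroupOfEquivOfLe hAB).toMonoidHom from rfl,
    ← Subgroup.map_map, γ.map_iso] at h

theorem subOf_le_sub_of_isSubnormal {A : Subgroup G} (hA : A.IsSubnormal) :
    γ.subOf A ≤ γ.sub G := by
  induction hA with
  | top => rw [subOf_top]
  | step A B hAB _ hA ih => exact (γ.subOf_inf_eq hAB).symm.le.trans inf_le_left |>.trans ih

theorem length_ne_top_of_isSubnormal {A : Subgroup G} (hA : A.IsSubnormal)
    (hG : γ.length G ≠ ⊤) : γ.length A ≠ ⊤ := by
  induction hA with
  | top =>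
    exact γ.length_ne_top_of_surjective (topEquiv (G := G)).symm.toMonoidHom
      (topEquiv (G := G)).symm.surjective hG
  | step A B hAB _ hA ih =>
    exact γ.length_ne_top_of_surjective (subgroupOfEquivOfLe hAB).toMonoidHom
      (MulEquiv.surjective _) (γ.length_ne_top_of_normal _ ih)

end SubgroupRadical

theorem map_subtype_series_le_of_sup_eq_top {G : Type} [Group G] [Finite G] {H : Subgroup G}
    {k : ℕ} (hH : H ⊔ γ.series G k = ⊤) (m : ℕ) :
    (γ.series H m).map H.subtype ≤ γ.series G (k + m) := by
  let φ := (mk' (γ.series G k)).comp H.subtype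
  have hφ : Function.Surjective φ := by
    rw [← MonoidHom.range_eq_top, MonoidHom.range_comp, range_subtype]
    exact comap_injective (mk'_surjective _) (by rw [comap_map_mk', sup_comm, hH, comap_top])
  rw [series_add, ← map_le_iff_le_comap, Subgroup.map_map]
  exact γ.map_series_le φ hφ m

def ContainsGenFitting : Prop :=
  ∀ (G : Type) [Group G] [Finite G], γ.length G ≠ ⊤ → genFitting G ≤ γ.sub G

section GenFitting

variable {γ} {G : Type} [Group G] [Finite G]

theorem sub_eq_top_of_le_center (hγF : γ.ContainsGenFitting) (hG : γ.length G ≠ ⊤)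
    (hZ : γ.sub G ≤ center G) : γ.sub G = ⊤ := by
  by_contra hne
  obtain ⟨T, -, ⟨hT, hTZ⟩, hmin⟩ := exists_minimal_le_of_wellFoundedLT
    (fun T : Subgroup G ↦ T.IsSubnormal ∧ ¬ T ≤ γ.sub G) ⊤ ⟨.top, fun h ↦ hne (top_unique h)⟩
  have hcentral : ∀ N : Subgroup T, N.Normal → N ≠ ⊤ → N ≤ center T := by
    intro N hN hNT x hx
    have hlt : N.map T.subtype < T := by
      refine (map_subtype_le N).lt_of_ne fun h ↦ hNT (map_injective T.subtype_injective ?_)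
      rw [h, map_subtype_top]
    have hNZ : N.map T.subtype ≤ γ.sub G :=
      by_contra fun h ↦ hlt.not_ge (hmin ⟨hN.isSubnormal.trans' hT, h⟩ hlt.le)
    exact mem_center_iff.mpr fun g ↦ Subtype.ext (mem_center_iff.mp (hZ (hNZ ⟨x, hx, rfl⟩)) g)
  have hsubT : γ.sub T = ⊤ := top_unique <| (genFitting_eq_top_of_forall_normal_le_center
    hcentral).ge.trans (hγF T (γ.length_ne_top_of_isSubnormal hT hG))
  have := γ.subOf_le_sub_of_isSubnormal hT
  rw [subOf, hsubT, map_subtype_top] at this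
  exact hTZ this

theorem centralizer_sub_le_sub (hγF : γ.ContainsGenFitting) (hG : γ.length G ≠ ⊤) :
    centralizer (γ.sub G : Set G) ≤ γ.sub G := by
  have := γ.normal G
  set C := centralizer (γ.sub G : Set G)
  have hP2 := γ.inf_eq G C inferInstance
  have hZ : γ.sub C ≤ center C := fun z hz ↦ mem_center_iff.mpr fun g ↦ Subtype.ext <|
    (mem_centralizer_iff.mp g.2 z (hP2.ge ⟨z, hz, rfl⟩).1).symm
  have hC := sub_eq_top_of_le_center hγF (γ.length_ne_top_of_normal C hG) hZ
  rw [hC, map_subtype_top] at hP2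
  exact inf_eq_right.mp hP2

theorem subOf_le_sub_of_series_two_le (hγF : γ.ContainsGenFitting) (hG : γ.length G ≠ ⊤)
    {M : Subgroup G} (hWM : γ.series G 2 ≤ M) : γ.subOf M ≤ γ.sub G := by
  set W := γ.series G 2
  let π := mk' (γ.series G 1)
  have hMW : γ.subOf M ⊓ W ≤ γ.sub G := by
    rw [γ.subOf_inf_eq hWM, ← γ.subOf_inf_eq le_top, subOf_top]
    exact inf_le_left
  intro x hx
  have hxW : π x ∈ centralizer (γ.sub (G ⧸ γ.series G 1) : Set _) := by
    rw [mem_centralizer_iff]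
    intro w' hw
    obtain ⟨w, rfl⟩ := mk'_surjective _ w'
    change w ∈ W at hw
    have hxw : ⁅x, w⁆ ∈ γ.sub G := by
      refine hMW (mem_inf.mpr ⟨?_, ?_⟩)
      · rw [show ⁅x, w⁆ = x * (w * x⁻¹ * w⁻¹) by rw [commutatorElement_def]; group]
        exact mul_mem hx (γ.conj_mem_subOf (hWM hw) (inv_mem hx))
      · rw [commutatorElement_def]
        exact mul_mem (Normal.conj_mem inferInstance w hw x) (inv_mem hw)
    rw [← series_one, ← ker_mk' (γ.series G 1), MonoidHom.mem_ker, map_commutatorElement,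
      commutatorElement_eq_one_iff_commute] at hxw
    exact hxw.symm.eq
  exact hMW ⟨hx, centralizer_sub_le_sub hγF
    (γ.length_ne_top_of_surjective π (mk'_surjective _) hG) hxW⟩

theorem map_subtype_series_le_series_add_two (hγF : γ.ContainsGenFitting)
    {M : Subgroup G} (hM : IsCoatom M) (hG : γ.length G ≠ ⊤) (m : ℕ) :
    (γ.series M m).map M.subtype ≤ γ.series G (m + 2) := by
  induction hn : Nat.card G using Nat.strong_induction_on generalizing G m with
  | _ n ih =>
    by_cases hWM : γ.series G 2 ≤ M
    swap
    · rw [add_comm]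
      exact γ.map_subtype_series_le_of_sup_eq_top (hM.2 _ (left_lt_sup.mpr hWM)) m
    rcases m with _ | m
    · simp [series_zero]
    let π := mk' (γ.series G 1)
    have : Nontrivial G := Subgroup.nontrivial_iff.mp (nontrivial_of_ne M ⊤ hM.1)
    have hM' : IsCoatom (M.map π) := isCoatom_map_of_ker_le (mk'_surjective _)
      (by rw [ker_mk']; exact (γ.series_mono one_le_two).trans hWM) hM
    have hIH := ih _ (hn ▸ γ.card_quotient_series_one_lt hG) hM'
      (γ.length_ne_top_of_surjective π (mk'_surjective _) hG) m rfl
    let φ := π.subgroupMap M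
    have hφ : γ.series M 1 ≤ φ.ker := by
      rw [series_one]
      intro y hy
      have : (y : G) ∈ γ.series G 1 := by
        rw [series_one]
        exact subOf_le_sub_of_series_two_le hγF hG hWM ⟨y, hy, rfl⟩
      exact Subtype.ext ((QuotientGroup.eq_one_iff _).mpr this)
    have hMφ := γ.map_series_add_le φ (π.subgroupMap_surjective M) hφ m
    rintro _ ⟨x, hx, rfl⟩
    rw [show m + 1 + 2 = 1 + (m + 2) by ring, series_add]
    rw [add_comm] at hx
    exact hIH ⟨φ x, hMφ ⟨x, hx, rfl⟩, rfl⟩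

end GenFitting

end PlotkinRadical

theorem plotkinRadical_length_sub_le_two (γ : PlotkinRadical)
    (hγF : ∀ (G : Type) [Group G] [Finite G], γ.length G ≠ ⊤ → genFitting G ≤ γ.sub G)
    (G : Type) [Group G] [Finite G] (M : Subgroup G) (hM : IsCoatom M)
    (hG : γ.length G ≠ ⊤) (hMfin : γ.length ↥M ≠ ⊤) :
    γ.length G - γ.length ↥M ≤ 2 := by
  obtain ⟨h, hh⟩ := ENat.ne_top_iff_exists.mp hMfin
  have hMh : γ.series M h = ⊤ := (γ.length_le_iff h).mp hh.ge
  have hMle : M ≤ γ.series G (h + 2) := by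
    simpa [hMh, map_subtype_top] using γ.map_subtype_series_le_series_add_two hγF hM hG h
  have hGh : γ.series G (h + 2) = ⊤ := by
    by_contra hne
    have : M.Normal := (hM.le_iff.mp hMle).resolve_left hne ▸ inferInstance
    have hMh' : M ≤ γ.series G h := by
      simpa [hMh, map_subtype_top] using (γ.map_subtype_series M h).le
    exact hne (top_unique ((γ.series_succ_eq_top_of_isCoatom_le hG hM hMh').ge.trans
      (γ.series_mono (Nat.le_succ _))))
  rw [← hh, tsub_le_iff_right, add_comm]
  exact_mod_cast (γ.length_le_iff (h + 2)).mpr hGh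
end

section
/- Let γ be a hereditary Kurosh-Amitsur radical on finite groups. Then for any finite group G and any normal subgroup N of G with N ⊆ γ(G), one has γ(G/N) = γ(G)/N. -/
open Subgroup

open Subgroup

open Subgroup

theorem kaRadical_map_quotient (γ : KARadical) (G : Type) [Group G] [Finite G]
    (N : Subgroup G) [N.Normal] (hN : N ≤ γ.sub G) :
    γ.sub (G ⧸ N) = (γ.sub G).map (QuotientGroup.mk' N) := by
  haveI hγN : (γ.sub G).Normal := γ.normal G
  set K : Subgroup (G ⧸ N) := (γ.sub G).map (QuotientGroup.mk' N) with hK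
  haveI hKnorm : K.Normal :=
    Subgroup.Normal.map hγN (QuotientGroup.mk' N) (QuotientGroup.mk'_surjective N)
  -- forward inclusion
  have h1 : K ≤ γ.sub (G ⧸ N) :=
    γ.map_le G (G ⧸ N) (QuotientGroup.mk' N) (QuotientGroup.mk'_surjective N)
  -- the isomorphism (G⧸N)⧸K ≃* G ⧸ γ.sub G
  have e := QuotientGroup.quotientQuotientEquivQuotient N (γ.sub G) hN
  have hbot : γ.sub ((G ⧸ N) ⧸ K) = ⊥ := by
    have := γ.map_iso ((G ⧸ N) ⧸ K) (G ⧸ γ.sub G) e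
    rw [γ.radical_quot G] at this
    exact (Subgroup.map_eq_bot_iff_of_injective _ e.injective).mp this
  have h2 : γ.sub (G ⧸ N) ≤ K := by
    have hm : (γ.sub (G ⧸ N)).map (QuotientGroup.mk' K) ≤ γ.sub ((G ⧸ N) ⧸ K) :=
      γ.map_le (G ⧸ N) ((G ⧸ N) ⧸ K) (QuotientGroup.mk' K) (QuotientGroup.mk'_surjective K)
    rw [hbot, le_bot_iff, Subgroup.map_eq_bot_iff, QuotientGroup.ker_mk'] at hm
    exact hm
  exact le_antisymm h2 h1
end

section
/- Let γ be a hereditary Plotkin radical on finite groups. Then for any finite group G and any normal subgroup N of G, max{h_γ(N), h_γ(G/N)} ≤ h_γ(G) ≤ h_γ(G/N) + h_γ(N). -/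
open Subgroup

open Subgroup

open Subgroup

instance PlotkinRadical.seriesNormal (γ : PlotkinRadical) (G : Type) [Group G] [Finite G]
    (n : ℕ) : (γ.series G n).Normal :=
  (radSeriesAux γ.sub γ.normal G n).2

theorem PlotkinRadical.series_zero_s11 (γ : PlotkinRadical) (G : Type) [Group G] [Finite G] :
    γ.series G 0 = ⊥ := rfl

theorem PlotkinRadical.series_succ_s11 (γ : PlotkinRadical) (G : Type) [Group G] [Finite G] (n : ℕ) :
    γ.series G (n + 1)
      = (γ.sub (G ⧸ γ.series G n)).comap (QuotientGroup.mk' (γ.series G n)) := rfl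

theorem PlotkinRadical.le_series_succ (γ : PlotkinRadical) (G : Type) [Group G] [Finite G]
    (n : ℕ) : γ.series G n ≤ γ.series G (n + 1) := by
  rw [γ.series_succ_s11 G n]
  intro x hx
  simp only [Subgroup.mem_comap]
  have : QuotientGroup.mk' (γ.series G n) x = 1 := by
    rw [← MonoidHom.mem_ker, QuotientGroup.ker_mk']; exact hx
  rw [this]; exact one_mem _

/-- monotone image lemma under epimorphisms -/
theorem PlotkinRadical.map_series_le_s11 (γ : PlotkinRadical) (G H : Type) [Group G] [Finite G]
    [Group H] [Finite H] (f : G →* H) (hf : Function.Surjective f) (n : ℕ) :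
    (γ.series G n).map f ≤ γ.series H n := by
  induction n with
  | zero => simp [γ.series_zero_s11]
  | succ n ih =>
    have hle : γ.series G n ≤ (γ.series H n).comap f := by
      intro x hx
      exact ih ⟨x, hx, rfl⟩
    set fbar := QuotientGroup.map (γ.series G n) (γ.series H n) f hle with hfbar
    have hfbar_surj : Function.Surjective fbar := by
      intro y
      obtain ⟨h, rfl⟩ := QuotientGroup.mk'_surjective (γ.series H n) y
      obtain ⟨g, rfl⟩ := hf h
      exact ⟨QuotientGroup.mk g, rfl⟩
    have key := γ.map_le _ _ fbar hfbar_surj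
    rintro y ⟨x, hx, rfl⟩
    rw [γ.series_succ_s11 G n] at hx
    rw [γ.series_succ_s11 H n, Subgroup.mem_comap]
    have : (QuotientGroup.mk' (γ.series H n)) (f x)
        = fbar ((QuotientGroup.mk' (γ.series G n)) x) := rfl
    rw [this]
    exact key ⟨_, hx, rfl⟩

/-- L1: the series of a normal subgroup is the intersection. -/
theorem PlotkinRadical.series_comap_subtype (γ : PlotkinRadical) (G : Type) [Group G] [Finite G]
    (N : Subgroup G) [hN : N.Normal] (n : ℕ) :
    (γ.series G n).comap N.subtype = γ.series ↥N n := by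
  induction n with
  | zero =>
    rw [γ.series_zero_s11, γ.series_zero_s11]
    ext x
    simp only [Subgroup.mem_comap, Subgroup.mem_bot]
    exact ⟨fun hx => Subtype.ext hx, fun hx => by rw [hx]; rfl⟩
  | succ n ih =>
    set A := γ.series G n with hA
    set B := γ.series ↥N n with hB
    set ψ : ↥N →* G ⧸ A := (QuotientGroup.mk' A).comp N.subtype with hψ
    have hker : ψ.ker = B := by
      rw [hψ, ← MonoidHom.comap_ker, QuotientGroup.ker_mk']
      exact ih
    have hR : ψ.range = N.map (QuotientGroup.mk' A) := by
      rw [hψ, MonoidHom.range_comp, Subgroup.range_subtype]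
    haveI hRn : ψ.range.Normal := by
      rw [hR]
      exact hN.map _ (QuotientGroup.mk'_surjective A)
    set e : (↥N ⧸ B) ≃* ↥ψ.range :=
      (QuotientGroup.quotientMulEquivOfEq hker.symm).trans
        (QuotientGroup.quotientKerEquivRange ψ) with he
    have hiso := γ.map_iso (↥N ⧸ B) ↥ψ.range e
    have hP2 := γ.inf_eq (G ⧸ A) ψ.range hRn
    ext x
    rw [Subgroup.mem_comap, γ.series_succ_s11, γ.series_succ_s11, Subgroup.mem_comap,
      Subgroup.mem_comap]
    have hx_mem : (QuotientGroup.mk' A) (N.subtype x) ∈ ψ.range := ⟨x, rfl⟩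
    have he_apply : (e (QuotientGroup.mk x) : G ⧸ A) = ψ x := rfl
    constructor
    · intro hx
      have : ψ x ∈ γ.sub (G ⧸ A) ⊓ ψ.range := ⟨hx, hx_mem⟩
      rw [hP2] at this
      obtain ⟨z, hz, hzx⟩ := this
      have hze : z = e (QuotientGroup.mk x) := by
        apply Subtype.ext
        rw [he_apply]; exact hzx
      have hz2 : e (QuotientGroup.mk x) ∈ (γ.sub (↥N ⧸ B)).map e.toMonoidHom := by
        rw [hiso]; exact hze ▸ hz
      have hz3 := Subgroup.mem_map_equiv.mp hz2
      rw [MulEquiv.symm_apply_apply] at hz3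
      exact hz3
    · intro hx
      have : e (QuotientGroup.mk x) ∈ γ.sub ↥ψ.range := by
        rw [← hiso, Subgroup.mem_map_equiv, MulEquiv.symm_apply_apply]
        exact hx
      have h2 : ψ x ∈ (γ.sub ↥ψ.range).map ψ.range.subtype :=
        ⟨e (QuotientGroup.mk x), this, he_apply⟩
      rw [← hP2] at h2
      exact h2.1

/-- L3: shifting the series through a quotient by a series term. -/
theorem PlotkinRadical.series_shift (γ : PlotkinRadical) (G : Type) [Group G] [Finite G]
    (h : ℕ) (i : ℕ) :
    γ.series G (h + i)
      = (γ.series (G ⧸ γ.series G h) i).comap (QuotientGroup.mk' (γ.series G h)) := by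
  set M := γ.series G h with hM
  induction i with
  | zero =>
    rw [γ.series_zero_s11]
    have h0 : (⊥ : Subgroup (G ⧸ M)).comap (QuotientGroup.mk' M) = M := by
      ext x
      rw [Subgroup.mem_comap, Subgroup.mem_bot, ← MonoidHom.mem_ker, QuotientGroup.ker_mk']
    rw [h0]
    rfl
  | succ i ih =>
    set P := γ.series G (h + i) with hP
    set Pi := γ.series (G ⧸ M) i with hPi
    have hMP : M ≤ P := by
      rw [ih]
      intro x hx
      rw [Subgroup.mem_comap]
      have : QuotientGroup.mk' M x = 1 := by
        rw [← MonoidHom.mem_ker, QuotientGroup.ker_mk']; exact hx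
      rw [this]; exact one_mem _
    have hmap : P.map (QuotientGroup.mk' M) = Pi := by
      rw [ih]
      exact Subgroup.map_comap_eq_self_of_surjective (QuotientGroup.mk'_surjective M) _
    set e : ((G ⧸ M) ⧸ Pi) ≃* (G ⧸ P) :=
      (QuotientGroup.quotientMulEquivOfEq hmap.symm).trans
        (QuotientGroup.quotientQuotientEquivQuotient M P hMP) with he
    have hiso := γ.map_iso ((G ⧸ M) ⧸ Pi) (G ⧸ P) e
    have he_apply : ∀ g : G,
        e (QuotientGroup.mk (QuotientGroup.mk g)) = QuotientGroup.mk g := fun g => rfl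
    have : h + (i + 1) = (h + i) + 1 := by omega
    rw [this]
    ext x
    rw [γ.series_succ_s11, Subgroup.mem_comap, Subgroup.mem_comap, γ.series_succ_s11,
      Subgroup.mem_comap, ← hiso, Subgroup.mem_map_equiv]
    have hsymm : e.symm ((QuotientGroup.mk' P) x)
        = QuotientGroup.mk (QuotientGroup.mk x) := by
      apply e.injective
      rw [MulEquiv.apply_symm_apply]
      exact (he_apply x).symm
    rw [hsymm]
    exact Iff.rfl

-- length lemmas

theorem PlotkinRadical.length_le_of_series_top (γ : PlotkinRadical) (G : Type) [Group G]
    [Finite G] (m : ℕ) (h : γ.series G m = ⊤) : γ.length G ≤ (m : ℕ∞) :=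
  sInf_le ⟨m, rfl, h⟩

theorem PlotkinRadical.length_eq_top_or (γ : PlotkinRadical) (G : Type) [Group G] [Finite G] :
    γ.length G = ⊤ ∨ ∃ m : ℕ, γ.length G = (m : ℕ∞) ∧ γ.series G m = ⊤ := by
  by_cases hne : {m : ℕ | γ.series G m = ⊤}.Nonempty
  · right
    refine ⟨sInf {m : ℕ | γ.series G m = ⊤}, ?_, Nat.sInf_mem hne⟩
    apply le_antisymm
    · exact γ.length_le_of_series_top G _ (Nat.sInf_mem hne)
    · apply le_sInf
      rintro n ⟨j, rfl, hj⟩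
      exact_mod_cast Nat.sInf_le hj
  · left
    unfold PlotkinRadical.length radLength
    rw [show {n : ℕ∞ | ∃ m : ℕ, n = m ∧ radSeries γ.sub γ.normal G m = ⊤} = ∅ from ?_,
      sInf_empty]
    ext n
    simp only [Set.mem_setOf_eq, Set.mem_empty_iff_false, iff_false]
    rintro ⟨m, rfl, hm⟩
    exact hne ⟨m, hm⟩


theorem plotkinRadical_length_le_and_le_add (γ : PlotkinRadical) (G : Type) [Group G]
    [Finite G] (N : Subgroup G) [N.Normal] :
    max (γ.length ↥N) (γ.length (G ⧸ N)) ≤ γ.length G ∧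
      γ.length G ≤ γ.length (G ⧸ N) + γ.length ↥N := by
  constructor
  · apply max_le
    · -- length N ≤ length G
      apply le_sInf
      rintro n ⟨m, rfl, hm⟩
      apply γ.length_le_of_series_top ↥N m
      rw [← γ.series_comap_subtype G N m]
      show (γ.series G m).comap N.subtype = ⊤
      rw [show γ.series G m = radSeries γ.sub γ.normal G m from rfl, hm, Subgroup.comap_top]
    · apply le_sInf
      rintro n ⟨m, rfl, hm⟩
      apply γ.length_le_of_series_top (G ⧸ N) m
      apply top_unique
      have := γ.map_series_le_s11 G (G ⧸ N) (QuotientGroup.mk' N) (QuotientGroup.mk'_surjective N) m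
      calc (⊤ : Subgroup (G ⧸ N)) = (⊤ : Subgroup G).map (QuotientGroup.mk' N) := by
            rw [Subgroup.map_top_of_surjective _ (QuotientGroup.mk'_surjective N)]
        _ = (γ.series G m).map (QuotientGroup.mk' N) := by
            rw [show γ.series G m = radSeries γ.sub γ.normal G m from rfl, hm]
        _ ≤ γ.series (G ⧸ N) m := this
  · rcases γ.length_eq_top_or (G ⧸ N) with hq | ⟨k, hk, hks⟩
    · rw [hq, top_add]; exact le_top
    rcases γ.length_eq_top_or ↥N with hn | ⟨h, hh, hhs⟩
    · rw [hn, add_top]; exact le_top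
    rw [hk, hh]
    -- N ≤ series G h
    have hNle : N ≤ γ.series G h := by
      intro x hx
      have : (⟨x, hx⟩ : ↥N) ∈ (γ.series G h).comap N.subtype := by
        rw [γ.series_comap_subtype G N h, hhs]; trivial
      exact this
    set M := γ.series G h with hM
    -- quotient map G⧸N → G⧸M
    set φ : G ⧸ N →* G ⧸ M := QuotientGroup.map N M (MonoidHom.id G) hNle with hφ
    have hφsurj : Function.Surjective φ := by
      intro y
      obtain ⟨g, rfl⟩ := QuotientGroup.mk'_surjective M y
      exact ⟨QuotientGroup.mk g, rfl⟩
    have hQ : γ.series (G ⧸ M) k = ⊤ := by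
      apply top_unique
      calc (⊤ : Subgroup (G ⧸ M)) = (⊤ : Subgroup (G ⧸ N)).map φ := by
            rw [Subgroup.map_top_of_surjective _ hφsurj]
        _ = (γ.series (G ⧸ N) k).map φ := by rw [hks]
        _ ≤ γ.series (G ⧸ M) k := γ.map_series_le_s11 _ _ φ hφsurj k
    have hGtop : γ.series G (h + k) = ⊤ := by
      rw [γ.series_shift G h k, hQ, Subgroup.comap_top]
    have := γ.length_le_of_series_top G (h + k) hGtop
    calc γ.length G ≤ ((h + k : ℕ) : ℕ∞) := this
      _ = (k : ℕ∞) + (h : ℕ∞) := by push_cast; ring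
end
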